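/- For complex $p,q$ with $\mathrm{Re}(p)>0$, $\mathrm{Re}(q)>0$ and real $t<x$, $\int_{t}^{x}(x-s)^{p-1}(s-t)^{q-1}\,{}_{1}F_{2}(a;b,c;z(s-t))\,ds = \frac{\Gamma(p)\Gamma(q)}{\Gamma(p+q)}(x-t)^{p+q-1}\,{}_{2}F_{3}(a,q;b,c,p+q;z(x-t))$. -/

import Mathlib

open Complex MeasureTheory intervalIntegral Finset

noncomputable def poch (a : ℂ) (k : ℕ) : ℂ := ∏ i ∈ Finset.range k, (a + i)

noncomputable def F01 (c z : ℂ) : ℂ :=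
  ∑' k : ℕ, 1 / (poch c k * (Nat.factorial k : ℂ)) * z ^ k

noncomputable def F02 (b c z : ℂ) : ℂ :=
  ∑' k : ℕ, 1 / (poch b k * poch c k * (Nat.factorial k : ℂ)) * z ^ k

noncomputable def F12 (a b c z : ℂ) : ℂ :=
  ∑' k : ℕ, poch a k / (poch b k * poch c k * (Nat.factorial k : ℂ)) * z ^ k

noncomputable def F22 (a b c d z : ℂ) : ℂ :=
  ∑' k : ℕ, poch a k * poch b k / (poch c k * poch d k * (Nat.factorial k : ℂ)) * z ^ k

noncomputable def F32 (a b c d e z : ℂ) : ℂ :=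
  ∑' k : ℕ, poch a k * poch b k * poch c k / (poch d k * poch e k * (Nat.factorial k : ℂ)) * z ^ k

noncomputable def F23 (a b c d e z : ℂ) : ℂ :=
  ∑' k : ℕ, poch a k * poch b k / (poch c k * poch d k * poch e k * (Nat.factorial k : ℂ)) * z ^ k

noncomputable def Bate (n : ℕ) (α β z : ℂ) : ℂ :=
  ∑ k ∈ Finset.range (n+1),
    (-1 : ℂ) ^ k * (Nat.factorial n : ℂ) /
      ((Nat.factorial k : ℂ) * (Nat.factorial (n - k) : ℂ) * poch (α+1) k * poch (β+1) k) * z ^ k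

lemma poch_succ (w : ℂ) (k : ℕ) : poch w (k+1) = poch w k * (w + k) :=
  Finset.prod_range_succ _ _

lemma poch_ne_zero {w : ℂ} (h : ∀ n : ℕ, w ≠ -n) (k : ℕ) : poch w k ≠ 0 := by
  refine Finset.prod_ne_zero_iff.2 fun i _ => ?_
  intro h0
  exact h i (by linear_combination h0)

lemma ne_neg_nat_of_re_pos {w : ℂ} (hw : 0 < w.re) : ∀ n : ℕ, w ≠ -n := by
  intro n h
  rw [h] at hw
  simp only [neg_re, natCast_re] at hw
  have : (0:ℝ) ≤ (n:ℝ) := n.cast_nonneg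
  linarith

lemma Gamma_poch {w : ℂ} (hw : 0 < w.re) (k : ℕ) :
    Complex.Gamma (w + k) = Complex.Gamma w * poch w k := by
  induction k with
  | zero => simp [poch]
  | succ n ih =>
    have hne : w + n ≠ 0 := by
      intro h0
      have : w.re + n = 0 := by
        have := congrArg Complex.re h0
        simpa [add_re, natCast_re] using this
      have : (0:ℝ) ≤ (n:ℝ) := n.cast_nonneg
      linarith
    have : w + (n+1 : ℕ) = (w + n) + 1 := by push_cast; ring
    rw [this, Complex.Gamma_add_one _ hne, ih, poch_succ]; ring

lemma M_step (a b c w : ℂ) (hb : ∀ n : ℕ, b ≠ -n) (hc : ∀ n : ℕ, c ≠ -n) (k : ℕ) :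
    (poch a (k+1) / (poch b (k+1) * poch c (k+1) * (Nat.factorial (k+1) : ℂ)) * w ^ (k+1)) *
      ((b+k) * ((c+k) * ((k:ℂ)+1))) =
    (poch a k / (poch b k * poch c k * (Nat.factorial k : ℂ)) * w ^ k) * ((a+k)*w) := by
  have hbk := poch_ne_zero hb k
  have hck := poch_ne_zero hc k
  have hb' : b + k ≠ 0 := fun h => hb k (by linear_combination h)
  have hc' : c + k ≠ 0 := fun h => hc k (by linear_combination h)
  have hf : (Nat.factorial k : ℂ) ≠ 0 := Nat.cast_ne_zero.2 (Nat.factorial_ne_zero k)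
  have hk1 : ((k:ℂ)+1) ≠ 0 := by
    intro h
    have := congrArg Complex.re h
    simp only [add_re, natCast_re, one_re, zero_re] at this
    have : (0:ℝ) ≤ (k:ℝ) := k.cast_nonneg
    linarith
  rw [poch_succ, poch_succ, poch_succ, Nat.factorial_succ]
  push_cast
  field_simp
  ring

set_option maxHeartbeats 1000000 in
lemma summable_M (a b c : ℂ) (hb : ∀ n : ℕ, b ≠ -n) (hc : ∀ n : ℕ, c ≠ -n) (w : ℂ) :
    Summable fun k : ℕ =>
      ‖poch a k / (poch b k * poch c k * (Nat.factorial k : ℂ)) * w ^ k‖ := by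
  set M : ℕ → ℂ := fun k =>
    poch a k / (poch b k * poch c k * (Nat.factorial k : ℂ)) * w ^ k with hM
  set K : ℝ := ‖a‖ + ‖b‖ + ‖c‖ + ‖w‖ + 4 with hK
  have hK4 : 4 ≤ K := by
    have := norm_nonneg a; have := norm_nonneg b; have := norm_nonneg c
    have := norm_nonneg w; simp only [hK]; linarith
  apply summable_of_ratio_norm_eventually_le (r := 1/2) (by norm_num)
  filter_upwards [Filter.eventually_ge_atTop ⌈2*K⌉₊] with k hk
  rw [Real.norm_eq_abs, Real.norm_eq_abs, _root_.abs_of_nonneg (norm_nonneg _),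
    _root_.abs_of_nonneg (norm_nonneg _)]
  have hkr : 2*K ≤ (k:ℝ) := le_trans (Nat.le_ceil _) (Nat.cast_le.2 hk)
  have hbn : (k:ℝ) - ‖b‖ ≤ ‖b + (k:ℂ)‖ := by
    have h1 : ‖((k:ℕ):ℂ)‖ ≤ ‖b + k‖ + ‖b‖ := by
      calc ‖((k:ℕ):ℂ)‖ = ‖(b + k) - b‖ := by congr 1; ring
        _ ≤ ‖b + k‖ + ‖b‖ := norm_sub_le _ _
    rw [Complex.norm_natCast] at h1; linarith
  have hcn : (k:ℝ) - ‖c‖ ≤ ‖c + (k:ℂ)‖ := by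
    have h1 : ‖((k:ℕ):ℂ)‖ ≤ ‖c + k‖ + ‖c‖ := by
      calc ‖((k:ℕ):ℂ)‖ = ‖(c + k) - c‖ := by congr 1; ring
        _ ≤ ‖c + k‖ + ‖c‖ := norm_sub_le _ _
    rw [Complex.norm_natCast] at h1; linarith
  have han : ‖a + (k:ℂ)‖ ≤ ‖a‖ + k := by
    calc ‖a + (k:ℂ)‖ ≤ ‖a‖ + ‖((k:ℕ):ℂ)‖ := norm_add_le _ _
      _ = ‖a‖ + k := by rw [Complex.norm_natCast]
  have hk1 : ‖(k:ℂ)+1‖ = (k:ℝ)+1 := by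
    have : ((k:ℂ)+1) = (((k+1:ℕ)):ℂ) := by push_cast; ring
    rw [this, Complex.norm_natCast]; push_cast; ring
  have hbK : ‖b‖ ≤ K - 4 := by
    have := norm_nonneg a; have := norm_nonneg c; have := norm_nonneg w
    simp only [hK]; linarith
  have hcK : ‖c‖ ≤ K - 4 := by
    have := norm_nonneg a; have := norm_nonneg b; have := norm_nonneg w
    simp only [hK]; linarith
  have haK : ‖a‖ ≤ K - 4 := by
    have := norm_nonneg c; have := norm_nonneg b; have := norm_nonneg w
    simp only [hK]; linarith
  have hwK : ‖w‖ ≤ K - 4 := by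
    have := norm_nonneg c; have := norm_nonneg b; have := norm_nonneg a
    simp only [hK]; linarith
  set den : ℂ := (b+k) * ((c+k) * ((k:ℂ)+1)) with hden
  have heq : ‖M (k+1)‖ * ‖den‖ = ‖M k‖ * ‖(a+(k:ℂ))*w‖ := by
    rw [← norm_mul, ← norm_mul, hM]
    simp only
    rw [M_step a b c w hb hc k]
  have hdenval : ‖den‖ = ‖b+(k:ℂ)‖ * (‖c+(k:ℂ)‖ * ‖(k:ℂ)+1‖) := by
    rw [hden, norm_mul, norm_mul]
  have hdenpos : 0 < ‖den‖ := by
    rw [hdenval, hk1]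
    have h1 : 0 < ‖b+(k:ℂ)‖ := by nlinarith
    have h2 : 0 < ‖c+(k:ℂ)‖ := by nlinarith
    positivity
  have hKk : K ≤ (k:ℝ)/2 := by linarith
  have hk8 : (8:ℝ) ≤ k := by linarith
  have hB : (k:ℝ)/2 ≤ ‖b+(k:ℂ)‖ := by linarith
  have hC : (k:ℝ)/2 ≤ ‖c+(k:ℂ)‖ := by linarith
  have hA : ‖a+(k:ℂ)‖ ≤ 3*(k:ℝ)/2 := by linarith
  have hW : ‖w‖ ≤ (k:ℝ)/2 := by linarith
  have hnum : ‖(a+(k:ℂ))*w‖ ≤ 1/2 * ‖den‖ := by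
    rw [norm_mul, hdenval, hk1]
    have hw0 := norm_nonneg w
    have ha0 := norm_nonneg (a+(k:ℂ))
    have h1 : ‖a+(k:ℂ)‖ * ‖w‖ ≤ (3*(k:ℝ)/2) * ((k:ℝ)/2) :=
      mul_le_mul hA hW hw0 (by linarith)
    have h2 : ((k:ℝ)/2) * ((k:ℝ)/2) ≤ ‖b+(k:ℂ)‖ * ‖c+(k:ℂ)‖ :=
      mul_le_mul hB hC (by linarith) (by linarith)
    have h3 : (((k:ℝ)/2) * ((k:ℝ)/2)) * ((k:ℝ)+1) ≤ (‖b+(k:ℂ)‖ * ‖c+(k:ℂ)‖) * ((k:ℝ)+1) :=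
      mul_le_mul_of_nonneg_right h2 (by linarith)
    nlinarith [sq_nonneg ((k:ℝ))]
  rw [← mul_le_mul_iff_of_pos_right hdenpos, heq]
  have := norm_nonneg (M k)
  nlinarith

set_option maxHeartbeats 1000000 in
theorem oneF2_interval_integral (a b c p q z : ℂ) (t x : ℝ)
    (hp : 0 < p.re) (hq : 0 < q.re) (htx : t < x)
    (hb : ∀ n : ℕ, b ≠ -n) (hc : ∀ n : ℕ, c ≠ -n) :
    (∫ s in t..x,
        ((x : ℂ) - s) ^ (p - 1) * ((s : ℂ) - t) ^ (q - 1) * F12 a b c (z * ((s : ℂ) - t))) =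
      Complex.Gamma p * Complex.Gamma q / Complex.Gamma (p + q) *
        ((x : ℂ) - t) ^ (p + q - 1) * F23 a q b c (p + q) (z * ((x : ℂ) - t)) := by
  have hT : (0:ℝ) < x - t := sub_pos.2 htx
  have hTc : ((x:ℂ) - ↑t) = ((x - t : ℝ) : ℂ) := by push_cast; ring
  have hTc0 : ((x:ℂ) - ↑t) ≠ 0 := by
    rw [hTc]; exact_mod_cast ne_of_gt hT
  have hpq : 0 < (p+q).re := by rw [add_re]; linarith
  have hqk : ∀ k : ℕ, 0 < (q + (k:ℂ)).re := by
    intro k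
    rw [add_re, natCast_re]
    have : (0:ℝ) ≤ (k:ℝ) := k.cast_nonneg
    linarith
  set ck : ℕ → ℂ := fun k => poch a k / (poch b k * poch c k * (Nat.factorial k : ℂ)) with hck
  set r : ℂ := z * ((x:ℂ) - ↑t) with hr
  set D : ℕ → ℂ := fun k => ((x:ℂ)-↑t)^(p-1) * ((x:ℂ)-↑t)^(q-1) * (ck k * r^k) with hD
  set g : ℕ → ℝ → ℂ := fun k y => D k * ((y:ℂ)^(q+(k:ℂ)-1) * (1-(y:ℂ))^(p-1)) with hg
  -- integrability
  have hβint : ∀ k : ℕ, IntegrableOn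
      (fun y:ℝ => (y:ℂ)^(q+(k:ℂ)-1) * (1-(y:ℂ))^(p-1)) (Set.Ioc (0:ℝ) 1) volume :=
    fun k => (intervalIntegrable_iff_integrableOn_Ioc_of_le zero_le_one).1
      (Complex.betaIntegral_convergent (hqk k) hp)
  have hβ0int : IntegrableOn
      (fun y:ℝ => (y:ℂ)^(q-1) * (1-(y:ℂ))^(p-1)) (Set.Ioc (0:ℝ) 1) volume :=
    (intervalIntegrable_iff_integrableOn_Ioc_of_le zero_le_one).1
      (Complex.betaIntegral_convergent hq hp)
  have hgint : ∀ k : ℕ, Integrable (g k) (volume.restrict (Set.Ioc (0:ℝ) 1)) :=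
    fun k => (hβint k).const_mul (D k)
  -- pointwise expansion on Ioc 0 1
  have hpt : Set.EqOn
      (fun y : ℝ => (fun s:ℝ => ((x:ℂ)-↑s)^(p-1)*(↑s-↑t)^(q-1)*F12 a b c (z*(↑s-↑t)))
        ((x-t)*y + t))
      (fun y : ℝ => ∑' k, g k y) (Set.Ioc (0:ℝ) 1) := by
    intro y hy
    obtain ⟨hy0, hy1⟩ := hy
    have hy0c : ((y:ℝ):ℂ) ≠ 0 := ofReal_ne_zero.2 hy0.ne'
    simp only
    have e1 : ((x:ℂ) - ↑((x-t)*y + t)) = (((x-t)*(1-y) : ℝ) : ℂ) := by push_cast; ring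
    have e2 : ((↑((x-t)*y + t) : ℂ) - ↑t) = (((x-t)*y : ℝ) : ℂ) := by push_cast; ring
    rw [e1, e2, Complex.ofReal_mul, Complex.ofReal_mul,
      mul_cpow_ofReal_nonneg hT.le (by linarith) (p-1),
      mul_cpow_ofReal_nonneg hT.le hy0.le (q-1)]
    have e3 : z * (((x-t):ℝ) * ((y:ℝ):ℂ)) = r * (y:ℂ) := by rw [hr, hTc]; push_cast; ring
    rw [e3, F12, ← tsum_mul_left]
    refine tsum_congr fun k => ?_
    have e4 : ((y:ℝ):ℂ)^(q+(k:ℂ)-1) = ((y:ℝ):ℂ)^(q-1) * ((y:ℝ):ℂ)^(k:ℕ) := by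
      rw [← Complex.cpow_natCast, ← Complex.cpow_add _ _ hy0c]
      congr 1
      ring
    simp only [hg, hD, hck]
    rw [e4, mul_pow, hTc]
    push_cast
    ring
  -- summability of the integrals of norms
  set Cβ : ℝ := ∫ y in Set.Ioc (0:ℝ) 1, ‖(y:ℂ)^(q-1) * (1-(y:ℂ))^(p-1)‖ with hCβ
  have hle : ∀ k : ℕ, (∫ y in Set.Ioc (0:ℝ) 1, ‖g k y‖) ≤ ‖D k‖ * Cβ := by
    intro k
    have hae : ∀ᵐ y ∂(volume.restrict (Set.Ioc (0:ℝ) 1)),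
        ‖g k y‖ ≤ ‖D k‖ * ‖(y:ℂ)^(q-1) * (1-(y:ℂ))^(p-1)‖ := by
      filter_upwards [ae_restrict_mem measurableSet_Ioc] with y hy
      obtain ⟨hy0, hy1⟩ := hy
      simp only [hg]
      rw [norm_mul]
      refine mul_le_mul_of_nonneg_left ?_ (norm_nonneg _)
      rw [norm_mul, norm_mul]
      refine mul_le_mul_of_nonneg_right ?_ (norm_nonneg _)
      rw [
        Complex.norm_cpow_eq_rpow_re_of_pos hy0, Complex.norm_cpow_eq_rpow_re_of_pos hy0]
      apply Real.rpow_le_rpow_of_exponent_ge hy0 hy1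
      simp only [sub_re, add_re, natCast_re, one_re]
      have : (0:ℝ) ≤ (k:ℝ) := k.cast_nonneg
      linarith
    calc (∫ y in Set.Ioc (0:ℝ) 1, ‖g k y‖)
        ≤ ∫ y in Set.Ioc (0:ℝ) 1, ‖D k‖ * ‖(y:ℂ)^(q-1) * (1-(y:ℂ))^(p-1)‖ :=
          integral_mono_ae (hgint k).norm (hβ0int.norm.const_mul _) hae
      _ = ‖D k‖ * Cβ := by rw [MeasureTheory.integral_const_mul]
  have hsum : Summable fun k => ∫ y in Set.Ioc (0:ℝ) 1, ‖g k y‖ := by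
    have hs2 : Summable fun k : ℕ =>
        (‖((x:ℂ)-↑t)^(p-1) * ((x:ℂ)-↑t)^(q-1)‖ * Cβ) * ‖ck k * r^k‖ := by
      apply Summable.mul_left
      simp only [hck]
      exact summable_M a b c hb hc r
    refine Summable.of_nonneg_of_le (fun k => integral_nonneg fun y => norm_nonneg _)
      (fun k => le_trans (hle k) (le_of_eq ?_)) hs2
    simp only [hD]
    rw [norm_mul]
    ring
  have hswap : (∫ y in Set.Ioc (0:ℝ) 1, ∑' k, g k y) = ∑' k, ∫ y in Set.Ioc (0:ℝ) 1, g k y :=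
    (integral_tsum_of_summable_integral_norm hgint hsum).symm
  have hterm : ∀ k : ℕ, (∫ y in Set.Ioc (0:ℝ) 1, g k y)
      = D k * Complex.betaIntegral (q+(k:ℂ)) p := by
    intro k
    simp only [hg]
    rw [MeasureTheory.integral_const_mul]
    congr 1
    rw [Complex.betaIntegral, intervalIntegral.integral_of_le zero_le_one]
  -- substitution
  have hsub := intervalIntegral.smul_integral_comp_mul_add (a := (0:ℝ)) (b := 1)
    (fun s:ℝ => ((x:ℂ)-↑s)^(p-1)*(↑s-↑t)^(q-1)*F12 a b c (z*(↑s-↑t))) (x-t) t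
  rw [show (x-t)*0+t = t by ring, show (x-t)*1+t = x by ring] at hsub
  rw [← hsub, intervalIntegral.integral_of_le (zero_le_one),
    setIntegral_congr_fun measurableSet_Ioc hpt, hswap, Complex.real_smul, ← tsum_mul_left,
    F23, ← tsum_mul_left]
  refine tsum_congr fun k => ?_
  rw [hterm k]
  -- per-term algebra
  have hfac : (Nat.factorial k : ℂ) ≠ 0 := Nat.cast_ne_zero.2 (Nat.factorial_ne_zero k)
  have hpb := poch_ne_zero hb k
  have hpc := poch_ne_zero hc k
  have hppq := poch_ne_zero (ne_neg_nat_of_re_pos hpq) k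
  have hΓpq := Complex.Gamma_ne_zero (ne_neg_nat_of_re_pos hpq)
  have hΓqkp : Complex.Gamma (q+(k:ℂ)+p) ≠ 0 :=
    Complex.Gamma_ne_zero (ne_neg_nat_of_re_pos (by rw [add_re]; have := hqk k; linarith))
  have hbeta : Complex.betaIntegral (q+(k:ℂ)) p =
      Complex.Gamma (q+(k:ℂ)) * Complex.Gamma p / Complex.Gamma (q+(k:ℂ)+p) := by
    rw [eq_div_iff hΓqkp]
    linear_combination (Complex.Gamma_mul_Gamma_eq_betaIntegral (hqk k) hp).symm
  have hGq : Complex.Gamma (q+(k:ℂ)) = Complex.Gamma q * poch q k := Gamma_poch hq k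
  have hGpq : Complex.Gamma (q+(k:ℂ)+p) = Complex.Gamma (p+q) * poch (p+q) k := by
    rw [show q+(k:ℂ)+p = (p+q)+(k:ℂ) by ring]
    exact Gamma_poch hpq k
  have hTpow : ((x:ℂ)-↑t)^(p+q-1)
      = ((x:ℂ)-↑t) * (((x:ℂ)-↑t)^(p-1) * ((x:ℂ)-↑t)^(q-1)) := by
    rw [show p+q-1 = 1+(p-1)+(q-1) by ring, Complex.cpow_add _ _ hTc0,
      Complex.cpow_add _ _ hTc0, Complex.cpow_one]
    ring
  rw [hbeta, hGq, hGpq, ← hTc, hTpow]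
  simp only [hD, hck]
  simp only [div_eq_mul_inv, mul_inv]
  ring
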